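/- Let x = δ^k A₁⋯A_r be the left normal form of an element x of a Garside group G (with r ≥ 1), and let u ∈ M with x^u := u⁻¹xu an element of the super summit set S_x. Then there exist elements u₀,…,u_r ∈ M with u₀ = τ^k(u) and u_r = u such that the normal form of x^u is δ^k (u₀⁻¹A₁u₁)⋯(u_{r-1}⁻¹A_r u_r), and explicitly u_i = (A_{i+1}⋯A_r u) ∧ δ·τ(A_i⁻¹u_{i-1}) for i = 1,…,r. -/

import Mathlib

namespace GarsideFormal

variable (G : Type*) [Group G]

/-- An atom of the submonoid `M`: a nontrivial element admitting no nontrivial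
factorization inside `M`. -/
def IsMAtom (M : Submonoid G) (a : G) : Prop :=
  a ∈ M ∧ a ≠ 1 ∧ ∀ b ∈ M, ∀ c ∈ M, a = b * c → b = 1 ∨ c = 1

/-- A Garside monoid `M`, realized as a submonoid (positive cone) of its group of
fractions `G`, together with its Garside element `δ`, left gcd and left lcm
operations (extended to `G`), and the cycling operation `cyc`. -/
structure Garside where
  M : Submonoid G
  δ : G
  gcd : G → G → G
  lcm : G → G → G
  cyc : G → G
  δ_mem : δ ∈ M
  /-- `G` is the group of fractions of `M`. -/
  fractions : ∀ g : G, ∃ a ∈ M, ∃ b ∈ M, g = a⁻¹ * b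
  /-- `M` is generated by its atoms. -/
  atoms_generate : Submonoid.closure {a : G | IsMAtom G M a} = M
  /-- Atomicity: bounded factorization lengths into atoms. -/
  atomic_bound : ∀ a ∈ M, ∃ N : ℕ, ∀ L : List G,
      (∀ b ∈ L, IsMAtom G M b) → L.prod = a → L.length ≤ N
  /-- Left divisors of `δ` coincide with right divisors of `δ`. -/
  divs_eq : {x : G | x ∈ M ∧ x⁻¹ * δ ∈ M} = {x : G | x ∈ M ∧ δ * x⁻¹ ∈ M}
  divs_finite : Set.Finite {x : G | x ∈ M ∧ x⁻¹ * δ ∈ M}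
  divs_generate : Submonoid.closure {x : G | x ∈ M ∧ x⁻¹ * δ ∈ M} = M
  gcd_dvd_left : ∀ a b : G, (gcd a b)⁻¹ * a ∈ M
  gcd_dvd_right : ∀ a b : G, (gcd a b)⁻¹ * b ∈ M
  gcd_greatest : ∀ a b x : G, x⁻¹ * a ∈ M → x⁻¹ * b ∈ M → x⁻¹ * gcd a b ∈ M
  lcm_dvd_left : ∀ a b : G, a⁻¹ * lcm a b ∈ M
  lcm_dvd_right : ∀ a b : G, b⁻¹ * lcm a b ∈ M
  lcm_least : ∀ a b x : G, a⁻¹ * x ∈ M → b⁻¹ * x ∈ M → (lcm a b)⁻¹ * x ∈ M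
  /-- Cycling: if `k = inf x` then `cyc x = x ^ (τ⁻ᵏ A₁)` where `A₁ = δ ∧ δ⁻ᵏ x`
  is the first factor of the left normal form of `x` (when `len x = 0` this
  gcd is `1` and `cyc x = x`). -/
  cyc_spec : ∀ (x : G) (k : ℤ),
      ((δ ^ k)⁻¹ * x ∈ M ∧ ∀ j : ℤ, (δ ^ j)⁻¹ * x ∈ M → j ≤ k) →
      cyc x = (δ ^ k * gcd δ ((δ ^ k)⁻¹ * x) * (δ ^ k)⁻¹)⁻¹ * x *
              (δ ^ k * gcd δ ((δ ^ k)⁻¹ * x) * (δ ^ k)⁻¹)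

variable {G}

namespace Garside

variable (S : Garside G)

/-- Left divisibility `a ≼ b`. -/
def dvd (a b : G) : Prop := a⁻¹ * b ∈ S.M

/-- Simple elements: the (left) divisors of `δ` in `M`. -/
def Simple (a : G) : Prop := a ∈ S.M ∧ a⁻¹ * S.δ ∈ S.M

/-- `k` is the infimum of `x`: maximal with `δ^k ≼ x`. -/
def IsInf (x : G) (k : ℤ) : Prop :=
  (S.δ ^ k)⁻¹ * x ∈ S.M ∧ ∀ j : ℤ, (S.δ ^ j)⁻¹ * x ∈ S.M → j ≤ k

/-- `s` is the supremum of `x`: minimal with `x ≼ δ^s`. -/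
def IsSup (x : G) (s : ℤ) : Prop :=
  x⁻¹ * S.δ ^ s ∈ S.M ∧ ∀ j : ℤ, x⁻¹ * S.δ ^ j ∈ S.M → s ≤ j

/-- `y` lies in the super summit set of `x`: `y` is conjugate to `x`, with
maximal infimum and minimal supremum among all conjugates of `x`. -/
def InSS (x y : G) : Prop :=
  IsConj x y ∧
  (∃ k : ℤ, S.IsInf y k ∧ ∀ z : G, IsConj x z → ∀ k' : ℤ, S.IsInf z k' → k' ≤ k) ∧
  (∃ s : ℤ, S.IsSup y s ∧ ∀ z : G, IsConj x z → ∀ s' : ℤ, S.IsSup z s' → s ≤ s')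

/-- `y` lies in the ultra summit set of `x`: it is in the super summit set and
periodic under cycling. -/
def InUS (x y : G) : Prop :=
  S.InSS x y ∧ ∃ n : ℕ, 0 < n ∧ S.cyc^[n] y = y

/-- `τ^k(z) = δ⁻ᵏ z δᵏ`, where `τ : z ↦ δ⁻¹zδ`. -/
def tauPow (k : ℤ) (z : G) : G := (S.δ ^ k)⁻¹ * z * S.δ ^ k

end Garside

/-- The ordered product `A (i+1) * A (i+2) * ⋯ * A r`. -/
def prodSeg (A : ℕ → G) (i r : ℕ) : G :=
  ((List.range (r - i)).map (fun j => A (i + 1 + j))).prod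

namespace Garside

variable (S : Garside G)

/-- `x` has left normal form `δ^k A₁ ⋯ A_r`: each `Aᵢ` is a nontrivial simple
element and `(Aᵢ⁻¹ δ) ∧ A_{i+1} = 1`. -/
def IsNormalForm (x : G) (k : ℤ) (r : ℕ) (A : ℕ → G) : Prop :=
  x = S.δ ^ k * prodSeg A 0 r ∧
  (∀ i, 1 ≤ i → i ≤ r → S.Simple (A i) ∧ A i ≠ 1) ∧
  (∀ i, 1 ≤ i → i < r → S.gcd ((A i)⁻¹ * S.δ) (A (i + 1)) = 1)

/-- The sequence `u₀, …, u_r` of the transport construction for `(x, u)`,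
where `x` has normal form `δ^k A₁ ⋯ A_r`:
`u₀ = τᵏ(u)`, `u_r = u`, and `uᵢ = (A_{i+1} ⋯ A_r u) ∧ δ·τ(Aᵢ⁻¹ u_{i-1})`. -/
def IsTransportSeq (k : ℤ) (r : ℕ) (A : ℕ → G) (u : G) (useq : ℕ → G) : Prop :=
  useq 0 = S.tauPow k u ∧ useq r = u ∧
  ∀ i, 1 ≤ i → i ≤ r →
    useq i = S.gcd (prodSeg A i r * u) (S.δ * S.tauPow 1 ((A i)⁻¹ * useq (i - 1)))

/-- The transport `φ_x(u) = τ⁻ᵏ(u₁) = τ⁻ᵏ(A₁⁻¹ · τᵏ(u) · (δ ∧ δ⁻ᵏ(x^u)))`,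
where `k = inf x` and `A₁ = δ ∧ δ⁻ᵏ x`. -/
def transp (k : ℤ) (x u : G) : G :=
  S.δ ^ k *
    ((S.gcd S.δ ((S.δ ^ k)⁻¹ * x))⁻¹ * S.tauPow k u *
      S.gcd S.δ ((S.δ ^ k)⁻¹ * (u⁻¹ * x * u))) * (S.δ ^ k)⁻¹

end Garside
section Aux

lemma exists_gen_list {s : Set G} {a : G} (ha : a ∈ Submonoid.closure s) :
    ∃ L : List G, (∀ b ∈ L, b ∈ s) ∧ L.prod = a := by
  induction ha using Submonoid.closure_induction with
  | mem x hx => exact ⟨[x], by simp [hx]⟩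
  | one => exact ⟨[], by simp⟩
  | mul x y hx hy ihx ihy =>
      obtain ⟨L1, h1, e1⟩ := ihx
      obtain ⟨L2, h2, e2⟩ := ihy
      refine ⟨L1 ++ L2, ?_, by simp [e1, e2]⟩
      intro b hb
      rcases List.mem_append.1 hb with h | h
      · exact h1 b h
      · exact h2 b h

namespace Garside

variable (S : Garside G)

lemma exists_atom_list {a : G} (ha : a ∈ S.M) :
    ∃ L : List G, (∀ b ∈ L, IsMAtom G S.M b) ∧ L.prod = a := by
  apply exists_gen_list (s := {a : G | IsMAtom G S.M a})
  rw [S.atoms_generate]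
  exact ha

lemma eq_one_of_inv_mem {a : G} (ha : a ∈ S.M) (ha' : a⁻¹ ∈ S.M) : a = 1 := by
  obtain ⟨L1, hL1, e1⟩ := S.exists_atom_list ha
  obtain ⟨L2, hL2, e2⟩ := S.exists_atom_list ha'
  by_contra hne
  have hL1ne : L1 ≠ [] := by
    rintro rfl
    simp at e1
    exact hne e1.symm
  obtain ⟨N, hN⟩ := S.atomic_bound 1 (one_mem _)
  have key : ∀ m : ℕ, ∃ L : List G, (∀ b ∈ L, IsMAtom G S.M b) ∧ L.prod = 1 ∧
      L.length = m * (L1.length + L2.length) := by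
    intro m
    induction m with
    | zero => exact ⟨[], by simp⟩
    | succ n ih =>
      obtain ⟨L, h1, h2, h3⟩ := ih
      refine ⟨(L1 ++ L2) ++ L, ?_, ?_, ?_⟩
      · intro b hb
        rcases List.mem_append.1 hb with h | h
        · rcases List.mem_append.1 h with h | h
          exacts [hL1 b h, hL2 b h]
        · exact h1 b h
      · simp [e1, e2, h2]
      · simp [h3]
        ring
  obtain ⟨L, h1, h2, h3⟩ := key (N + 1)
  have hle := hN L h1 h2
  have hlen : 1 ≤ L1.length := by
    cases L1 with
    | nil => exact absurd rfl hL1ne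
    | cons _ _ => simp
  have : N + 1 ≤ (N + 1) * (L1.length + L2.length) :=
    Nat.le_mul_of_pos_right _ (by omega)
  omega

lemma mul_eq_one_left {a b : G} (ha : a ∈ S.M) (hb : b ∈ S.M) (h : a * b = 1) : a = 1 := by
  have hinv : a⁻¹ = b := inv_eq_of_mul_eq_one_right h
  exact S.eq_one_of_inv_mem ha (hinv ▸ hb)

lemma dvd_antisymm' {a b : G} (h1 : a⁻¹ * b ∈ S.M) (h2 : b⁻¹ * a ∈ S.M) : a = b := by
  have h : (a⁻¹ * b) * (b⁻¹ * a) = 1 := by group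
  have h0 : a⁻¹ * b = 1 := S.mul_eq_one_left h1 h2 h
  have := inv_mul_eq_one.mp h0
  exact this

lemma gcd_eq_of {a b d : G} (ha : d⁻¹ * a ∈ S.M) (hb : d⁻¹ * b ∈ S.M)
    (hgr : ∀ e : G, e⁻¹ * a ∈ S.M → e⁻¹ * b ∈ S.M → e⁻¹ * d ∈ S.M) :
    S.gcd a b = d :=
  S.dvd_antisymm' (hgr _ (S.gcd_dvd_left a b) (S.gcd_dvd_right a b))
    (S.gcd_greatest a b d ha hb)

lemma gcd_mem {a b : G} (ha : a ∈ S.M) (hb : b ∈ S.M) : S.gcd a b ∈ S.M := by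
  have := S.gcd_greatest a b 1 (by simpa using ha) (by simpa using hb)
  simpa using this

lemma gcd_one_right {a : G} (ha : a ∈ S.M) : S.gcd a 1 = 1 :=
  S.gcd_eq_of (by simpa using ha) (by simpa using one_mem S.M)
    (fun e _ h2 => by simpa using h2)

lemma tau_mem {m : G} (hm : m ∈ S.M) : S.δ⁻¹ * m * S.δ ∈ S.M := by
  have hm' : m ∈ Submonoid.closure {x : G | x ∈ S.M ∧ x⁻¹ * S.δ ∈ S.M} := by
    rw [S.divs_generate]; exact hm
  clear hm
  induction hm' using Submonoid.closure_induction with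
  | mem s hs =>
      have ht : s⁻¹ * S.δ ∈ {x : G | x ∈ S.M ∧ S.δ * x⁻¹ ∈ S.M} := by
        refine ⟨hs.2, ?_⟩
        have e : S.δ * (s⁻¹ * S.δ)⁻¹ = s := by group
        rw [e]; exact hs.1
      rw [← S.divs_eq] at ht
      have h2 := ht.2
      have e : (s⁻¹ * S.δ)⁻¹ * S.δ = S.δ⁻¹ * s * S.δ := by group
      rwa [e] at h2
  | one => simpa using one_mem S.M
  | mul a b _ _ iha ihb =>
      have e : S.δ⁻¹ * (a * b) * S.δ = (S.δ⁻¹ * a * S.δ) * (S.δ⁻¹ * b * S.δ) := by group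
      rw [e]; exact mul_mem iha ihb

lemma tau_inv_mem {m : G} (hm : m ∈ S.M) : S.δ * m * S.δ⁻¹ ∈ S.M := by
  have hm' : m ∈ Submonoid.closure {x : G | x ∈ S.M ∧ x⁻¹ * S.δ ∈ S.M} := by
    rw [S.divs_generate]; exact hm
  clear hm
  induction hm' using Submonoid.closure_induction with
  | mem s hs =>
      have hs' : s ∈ {x : G | x ∈ S.M ∧ S.δ * x⁻¹ ∈ S.M} := by
        rw [← S.divs_eq]; exact hs
      have ht : S.δ * s⁻¹ ∈ {x : G | x ∈ S.M ∧ x⁻¹ * S.δ ∈ S.M} := by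
        refine ⟨hs'.2, ?_⟩
        have e : (S.δ * s⁻¹)⁻¹ * S.δ = s := by group
        rw [e]; exact hs.1
      rw [S.divs_eq] at ht
      have h2 := ht.2
      have e : S.δ * (S.δ * s⁻¹)⁻¹ = S.δ * s * S.δ⁻¹ := by group
      rwa [e] at h2
  | one => simpa using one_mem S.M
  | mul a b _ _ iha ihb =>
      have e : S.δ * (a * b) * S.δ⁻¹ = (S.δ * a * S.δ⁻¹) * (S.δ * b * S.δ⁻¹) := by group
      rw [e]; exact mul_mem iha ihb

lemma tau_zpow_mem (j : ℤ) {m : G} (hm : m ∈ S.M) : (S.δ ^ j)⁻¹ * m * S.δ ^ j ∈ S.M := by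
  induction j using Int.induction_on with
  | zero => simpa using hm
  | succ n ih =>
      have e : (S.δ ^ ((n : ℤ) + 1))⁻¹ * m * S.δ ^ ((n : ℤ) + 1)
          = S.δ⁻¹ * ((S.δ ^ (n : ℤ))⁻¹ * m * S.δ ^ (n : ℤ)) * S.δ := by group
      rw [e]; exact S.tau_mem ih
  | pred n ih =>
      have e : (S.δ ^ (-(n : ℤ) - 1))⁻¹ * m * S.δ ^ (-(n : ℤ) - 1)
          = S.δ * ((S.δ ^ (-(n : ℤ)))⁻¹ * m * S.δ ^ (-(n : ℤ))) * S.δ⁻¹ := by group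
      rw [e]; exact S.tau_inv_mem ih

lemma tau_npow_mem (n : ℕ) {m : G} (hm : m ∈ S.M) : (S.δ ^ n)⁻¹ * m * S.δ ^ n ∈ S.M := by
  have := S.tau_zpow_mem (n : ℤ) hm
  rwa [zpow_natCast] at this

lemma zpow_mem_of_nonneg {j : ℤ} (hj : 0 ≤ j) : S.δ ^ j ∈ S.M := by
  obtain ⟨n, rfl⟩ := Int.eq_ofNat_of_zero_le hj
  rw [zpow_natCast]
  exact pow_mem S.δ_mem n

end Garside

end Aux
namespace Garside

variable (S : Garside G)

lemma gcd_mul_left' (x a b : G) : S.gcd (x * a) (x * b) = x * S.gcd a b := by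
  apply S.gcd_eq_of
  · have e : (x * S.gcd a b)⁻¹ * (x * a) = (S.gcd a b)⁻¹ * a := by group
    rw [e]; exact S.gcd_dvd_left a b
  · have e : (x * S.gcd a b)⁻¹ * (x * b) = (S.gcd a b)⁻¹ * b := by group
    rw [e]; exact S.gcd_dvd_right a b
  · intro e he1 he2
    have h1 : (x⁻¹ * e)⁻¹ * a = e⁻¹ * (x * a) := by group
    have h2 : (x⁻¹ * e)⁻¹ * b = e⁻¹ * (x * b) := by group
    have hg := S.gcd_greatest a b (x⁻¹ * e) (by rw [h1]; exact he1) (by rw [h2]; exact he2)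
    have e3 : e⁻¹ * (x * S.gcd a b) = (x⁻¹ * e)⁻¹ * S.gcd a b := by group
    rw [e3]; exact hg

lemma gcd_split {X A n : G} (hX : X ∈ S.M) (hA : A ∈ S.M) (hAX : A⁻¹ * X ∈ S.M)
    (hn : n ∈ S.M) : S.gcd X (A * n) = A * S.gcd (A⁻¹ * X) n := by
  apply S.gcd_eq_of
  · have e : (A * S.gcd (A⁻¹ * X) n)⁻¹ * X = (S.gcd (A⁻¹ * X) n)⁻¹ * (A⁻¹ * X) := by group
    rw [e]; exact S.gcd_dvd_left _ _
  · have e : (A * S.gcd (A⁻¹ * X) n)⁻¹ * (A * n) = (S.gcd (A⁻¹ * X) n)⁻¹ * n := by group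
    rw [e]; exact S.gcd_dvd_right _ _
  · intro e he1 he2
    have hLX : (S.lcm e A)⁻¹ * X ∈ S.M := S.lcm_least e A X he1 hAX
    have hLAn : (S.lcm e A)⁻¹ * (A * n) ∈ S.M := S.lcm_least e A (A * n) he2 (by simpa using hn)
    have hc1 : (A⁻¹ * S.lcm e A)⁻¹ * (A⁻¹ * X) ∈ S.M := by
      have e2 : (A⁻¹ * S.lcm e A)⁻¹ * (A⁻¹ * X) = (S.lcm e A)⁻¹ * X := by group
      rw [e2]; exact hLX
    have hc2 : (A⁻¹ * S.lcm e A)⁻¹ * n ∈ S.M := by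
      have e2 : (A⁻¹ * S.lcm e A)⁻¹ * n = (S.lcm e A)⁻¹ * (A * n) := by group
      rw [e2]; exact hLAn
    have hcg := S.gcd_greatest _ _ _ hc1 hc2
    have heL : e⁻¹ * S.lcm e A ∈ S.M := S.lcm_dvd_left e A
    have efin : e⁻¹ * (A * S.gcd (A⁻¹ * X) n)
        = (e⁻¹ * S.lcm e A) * ((A⁻¹ * S.lcm e A)⁻¹ * S.gcd (A⁻¹ * X) n) := by group
    rw [efin]; exact mul_mem heL hcg

lemma gcd_mul_delta (a b : G) : S.gcd (a * S.δ) (b * S.δ) = S.gcd a b * S.δ := by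
  apply S.gcd_eq_of
  · have e : (S.gcd a b * S.δ)⁻¹ * (a * S.δ) = S.δ⁻¹ * ((S.gcd a b)⁻¹ * a) * S.δ := by group
    rw [e]; exact S.tau_mem (S.gcd_dvd_left a b)
  · have e : (S.gcd a b * S.δ)⁻¹ * (b * S.δ) = S.δ⁻¹ * ((S.gcd a b)⁻¹ * b) * S.δ := by group
    rw [e]; exact S.tau_mem (S.gcd_dvd_right a b)
  · intro e he1 he2
    have h1 : (e * S.δ⁻¹)⁻¹ * a = S.δ * (e⁻¹ * (a * S.δ)) * S.δ⁻¹ := by group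
    have h2 : (e * S.δ⁻¹)⁻¹ * b = S.δ * (e⁻¹ * (b * S.δ)) * S.δ⁻¹ := by group
    have hg := S.gcd_greatest a b (e * S.δ⁻¹)
      (by rw [h1]; exact S.tau_inv_mem he1) (by rw [h2]; exact S.tau_inv_mem he2)
    have efin : e⁻¹ * (S.gcd a b * S.δ) = S.δ⁻¹ * ((e * S.δ⁻¹)⁻¹ * S.gcd a b) * S.δ := by group
    rw [efin]; exact S.tau_mem hg

lemma gcd_mul_delta_pow (a b : G) (n : ℕ) :
    S.gcd (a * S.δ ^ n) (b * S.δ ^ n) = S.gcd a b * S.δ ^ n := by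
  induction n with
  | zero => simp
  | succ n ih =>
      rw [pow_succ, ← mul_assoc, ← mul_assoc, S.gcd_mul_delta, ih, mul_assoc]

lemma pad {v : G} (n : ℕ) (hv : v⁻¹ * S.δ ^ (n + 1) ∈ S.M) :
    ((S.gcd S.δ v)⁻¹ * v)⁻¹ * S.δ ^ n ∈ S.M := by
  have key : S.gcd (S.δ ^ (n + 1)) (v * S.δ ^ n) = S.gcd S.δ v * S.δ ^ n := by
    have h := S.gcd_mul_delta_pow S.δ v n
    rw [← h]
    congr 1
    rw [pow_succ']
  have hdvd : v⁻¹ * S.gcd (S.δ ^ (n + 1)) (v * S.δ ^ n) ∈ S.M :=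
    S.gcd_greatest _ _ v hv (by simpa using pow_mem S.δ_mem n)
  rw [key] at hdvd
  have e : ((S.gcd S.δ v)⁻¹ * v)⁻¹ * S.δ ^ n = v⁻¹ * (S.gcd S.δ v * S.δ ^ n) := by group
  rw [e]; exact hdvd

lemma list_divs_atom : ∀ L : List G, (∀ b ∈ L, b ∈ S.M ∧ b⁻¹ * S.δ ∈ S.M) →
    IsMAtom G S.M L.prod → (L.prod)⁻¹ * S.δ ∈ S.M := by
  intro L
  induction L with
  | nil => intro _ h; exact absurd List.prod_nil h.2.1
  | cons d t ih =>
    intro hmem hatom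
    have hd := hmem d (by simp)
    have ht : ∀ b ∈ t, b ∈ S.M ∧ b⁻¹ * S.δ ∈ S.M := fun b hb => hmem b (by simp [hb])
    have hdp : (d :: t).prod = d * t.prod := by simp
    have htM : t.prod ∈ S.M := Submonoid.list_prod_mem _ (fun b hb => (ht b hb).1)
    rcases hatom.2.2 d hd.1 t.prod htM hdp with h1 | h1
    · have e : (d :: t).prod = t.prod := by simp [hdp, h1]
      rw [e] at hatom ⊢
      exact ih ht hatom
    · have e : (d :: t).prod = d := by simp [hdp, h1]
      rw [e]
      exact hd.2

lemma atom_dvd_delta {a : G} (ha : IsMAtom G S.M a) : a⁻¹ * S.δ ∈ S.M := by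
  have hm : a ∈ Submonoid.closure {x : G | x ∈ S.M ∧ x⁻¹ * S.δ ∈ S.M} := by
    rw [S.divs_generate]; exact ha.1
  obtain ⟨L, hL, hLp⟩ := exists_gen_list hm
  subst hLp
  exact S.list_divs_atom L hL ha

lemma eq_one_of_gcd_delta_eq_one {v : G} (hv : v ∈ S.M) (h : S.gcd S.δ v = 1) : v = 1 := by
  obtain ⟨L, hL, hLp⟩ := S.exists_atom_list hv
  cases L with
  | nil => simpa using hLp.symm
  | cons a t =>
    exfalso
    have ha := hL a (by simp)
    have haδ : a⁻¹ * S.δ ∈ S.M := S.atom_dvd_delta ha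
    have hav : a⁻¹ * v = t.prod := by rw [← hLp]; simp
    have havM : a⁻¹ * v ∈ S.M := by
      rw [hav]
      exact Submonoid.list_prod_mem _ (fun b hb => (hL b (by simp [hb])).1)
    have hgr := S.gcd_greatest S.δ v a haδ havM
    rw [h] at hgr
    exact ha.2.1 (S.eq_one_of_inv_mem ha.1 (by simpa using hgr))

end Garside
lemma prodSeg_self (A : ℕ → G) (i : ℕ) : prodSeg A i i = 1 := by
  simp [prodSeg]

lemma prodSeg_succ_right (A : ℕ → G) {i j : ℕ} (h : i ≤ j) :
    prodSeg A i (j + 1) = prodSeg A i j * A (j + 1) := by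
  unfold prodSeg
  have e : j + 1 - i = (j - i) + 1 := by omega
  rw [e, List.range_succ, List.map_append, List.prod_append, List.map_singleton,
    List.prod_singleton]
  congr 2
  omega

lemma prodSeg_succ_left (A : ℕ → G) : ∀ {i r : ℕ}, i < r →
    prodSeg A i r = A (i + 1) * prodSeg A (i + 1) r := by
  intro i r
  induction r with
  | zero => omega
  | succ j ih =>
    intro h
    rcases Nat.lt_or_ge i j with hij | hij
    · rw [prodSeg_succ_right A (by omega : i ≤ j), ih hij,
        prodSeg_succ_right A (by omega : i + 1 ≤ j), mul_assoc]
    · have hji : i = j := by omega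
      subst hji
      rw [prodSeg_succ_right A (le_refl i), prodSeg_self, prodSeg_self]
      simp

lemma prodSeg_split (A : ℕ → G) {i j r : ℕ} (h1 : i ≤ j) (h2 : j ≤ r) :
    prodSeg A i j * prodSeg A j r = prodSeg A i r := by
  induction j, h1 using Nat.le_induction with
  | base => rw [prodSeg_self]; simp
  | succ j hij ih =>
    rw [prodSeg_succ_right A hij, mul_assoc,
      ← prodSeg_succ_left A (by omega : j < r), ih (by omega)]

lemma prodSeg_congr {A B : ℕ → G} {i r : ℕ} (h : ∀ j, i < j → j ≤ r → A j = B j) :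
    prodSeg A i r = prodSeg B i r := by
  unfold prodSeg
  congr 1
  apply List.map_congr_left
  intro j hj
  rw [List.mem_range] at hj
  exact h (i + 1 + j) (by omega) (by omega)

namespace Garside

variable (S : Garside G)

lemma prodSeg_mem {A : ℕ → G} {i r : ℕ} (h : ∀ j, i < j → j ≤ r → A j ∈ S.M) :
    prodSeg A i r ∈ S.M := by
  apply Submonoid.list_prod_mem
  intro b hb
  simp only [List.mem_map, List.mem_range] at hb
  obtain ⟨j, hj, rfl⟩ := hb
  exact h (i + 1 + j) (by omega) (by omega)

lemma prodSeg_dvd_pow {A : ℕ → G} {r : ℕ} :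
    ∀ (n : ℕ) {i : ℕ}, r = i + n → (∀ j, i < j → j ≤ r → S.Simple (A j)) →
    (prodSeg A i r)⁻¹ * S.δ ^ n ∈ S.M := by
  intro n
  induction n with
  | zero =>
    intro i hi _
    have : r = i := by omega
    subst this
    rw [prodSeg_self]
    simpa using one_mem S.M
  | succ n ih =>
    intro i hi hsimp
    have h1 : i < r := by omega
    rw [prodSeg_succ_left A h1]
    have hA := hsimp (i + 1) (by omega) (by omega)
    have ihh := ih (i := i + 1) (by omega) (fun j hj1 hj2 => hsimp j (by omega) hj2)
    have e : (A (i + 1) * prodSeg A (i + 1) r)⁻¹ * S.δ ^ (n + 1)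
        = ((prodSeg A (i + 1) r)⁻¹ * S.δ ^ n) *
          ((S.δ ^ n)⁻¹ * ((A (i + 1))⁻¹ * S.δ) * S.δ ^ n) := by group
    rw [e]
    exact mul_mem ihh (S.tau_npow_mem n hA.2)

lemma prodSeg_dvd_pow' {A : ℕ → G} {i r : ℕ} (h : i ≤ r)
    (hsimp : ∀ j, i < j → j ≤ r → S.Simple (A j)) :
    (prodSeg A i r)⁻¹ * S.δ ^ (r - i) ∈ S.M :=
  S.prodSeg_dvd_pow (r - i) (by omega) hsimp

lemma gcd_tail {A : ℕ → G} {r : ℕ}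
    (hA : ∀ i, 1 ≤ i → i ≤ r → S.Simple (A i) ∧ A i ≠ 1)
    (hW : ∀ i, 1 ≤ i → i < r → S.gcd ((A i)⁻¹ * S.δ) (A (i + 1)) = 1) :
    ∀ (n : ℕ) (i : ℕ), r = i + n → 1 ≤ i → i ≤ r →
    S.gcd ((A i)⁻¹ * S.δ) (prodSeg A i r) = 1 := by
  intro n
  induction n with
  | zero =>
    intro i h0 h1 h2
    rw [show prodSeg A i r = 1 from by rw [show r = i from by omega]; exact prodSeg_self A i]
    exact S.gcd_one_right (hA i h1 h2).1.2
  | succ n ih =>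
    intro i hrn h1 h2
    have hir : i < r := by omega
    have hAi := (hA i h1 h2).1
    have hPmem : prodSeg A i r ∈ S.M :=
      S.prodSeg_mem (fun j hj1 hj2 => (hA j (by omega) hj2).1.1)
    have hP1mem : prodSeg A (i + 1) r ∈ S.M :=
      S.prodSeg_mem (fun j hj1 hj2 => (hA j (by omega) hj2).1.1)
    set g := S.gcd ((A i)⁻¹ * S.δ) (prodSeg A i r) with hg
    have hgM : g ∈ S.M := S.gcd_mem hAi.2 hPmem
    have hgδ : g⁻¹ * S.δ ∈ S.M := by
      have hl := S.gcd_dvd_left ((A i)⁻¹ * S.δ) (prodSeg A i r)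
      have e : g⁻¹ * S.δ = (g⁻¹ * ((A i)⁻¹ * S.δ)) * (S.δ⁻¹ * A i * S.δ) := by group
      rw [e]; exact mul_mem hl (S.tau_mem hAi.1)
    have hAi1 := (hA (i + 1) (by omega) (by omega)).1
    have hinner : S.gcd ((A (i + 1))⁻¹ * S.δ) (prodSeg A (i + 1) r) = 1 :=
      ih (i + 1) (by omega) (by omega) (by omega)
    have hsplit : S.gcd S.δ (prodSeg A i r) = A (i + 1) := by
      rw [prodSeg_succ_left A hir, S.gcd_split S.δ_mem hAi1.1 hAi1.2 hP1mem, hinner, mul_one]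
    have hgA : g⁻¹ * A (i + 1) ∈ S.M := by
      have h := S.gcd_greatest S.δ (prodSeg A i r) g hgδ (S.gcd_dvd_right _ _)
      rwa [hsplit] at h
    have hfin : g⁻¹ * S.gcd ((A i)⁻¹ * S.δ) (A (i + 1)) ∈ S.M :=
      S.gcd_greatest _ _ g (S.gcd_dvd_left _ _) hgA
    rw [hW i h1 hir] at hfin
    exact S.eq_one_of_inv_mem hgM (by simpa using hfin)

lemma gcd_tail' {A : ℕ → G} {r : ℕ}
    (hA : ∀ i, 1 ≤ i → i ≤ r → S.Simple (A i) ∧ A i ≠ 1)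
    (hW : ∀ i, 1 ≤ i → i < r → S.gcd ((A i)⁻¹ * S.δ) (A (i + 1)) = 1)
    {i : ℕ} (h1 : 1 ≤ i) (h2 : i ≤ r) :
    S.gcd ((A i)⁻¹ * S.δ) (prodSeg A i r) = 1 :=
  S.gcd_tail hA hW (r - i) i (by omega) h1 h2

lemma min_len {A : ℕ → G} {r : ℕ}
    (hA : ∀ i, 1 ≤ i → i ≤ r → S.Simple (A i) ∧ A i ≠ 1)
    (hW : ∀ i, 1 ≤ i → i < r → S.gcd ((A i)⁻¹ * S.δ) (A (i + 1)) = 1) :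
    ∀ (n : ℕ) (i : ℕ), r = i + n → 1 ≤ n →
    (prodSeg A i r)⁻¹ * S.δ ^ (n - 1) ∈ S.M → False := by
  intro n
  induction n with
  | zero => omega
  | succ n ih =>
    intro i hrn h1 hdvd
    have hir : i < r := by omega
    rcases Nat.eq_zero_or_pos n with h0 | h0
    · subst h0
      have hrr : r = i + 1 := by omega
      rw [prodSeg_succ_left A hir] at hdvd
      rw [show prodSeg A (i + 1) r = 1 from by rw [hrr]; exact prodSeg_self A (i + 1)] at hdvd
      have hAr := hA (i + 1) (by omega) (by omega)
      apply hAr.2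
      apply S.eq_one_of_inv_mem hAr.1.1
      simpa using hdvd
    · have hAi1 := (hA (i + 1) (by omega) (by omega)).1
      have hP1mem : prodSeg A (i + 1) r ∈ S.M :=
        S.prodSeg_mem (fun j hj1 hj2 => (hA j (by omega) hj2).1.1)
      have hhead : S.gcd S.δ (prodSeg A i r) = A (i + 1) := by
        rw [prodSeg_succ_left A hir, S.gcd_split S.δ_mem hAi1.1 hAi1.2 hP1mem,
          S.gcd_tail' hA hW (by omega) (by omega), mul_one]
      have hdvd' : (prodSeg A i r)⁻¹ * S.δ ^ ((n - 1) + 1) ∈ S.M := by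
        rw [show (n - 1) + 1 = n by omega]
        simpa using hdvd
      have hpad := S.pad (n - 1) hdvd'
      rw [hhead, prodSeg_succ_left A hir, inv_mul_cancel_left] at hpad
      exact ih (i + 1) (by omega) (by omega) hpad

lemma min_len' {A : ℕ → G} {r : ℕ}
    (hA : ∀ i, 1 ≤ i → i ≤ r → S.Simple (A i) ∧ A i ≠ 1)
    (hW : ∀ i, 1 ≤ i → i < r → S.gcd ((A i)⁻¹ * S.δ) (A (i + 1)) = 1)
    {i : ℕ} (h : i < r) (hdvd : (prodSeg A i r)⁻¹ * S.δ ^ (r - i - 1) ∈ S.M) : False :=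
  S.min_len hA hW (r - i) i (by omega) (by omega) (by rwa [show r - i - 1 = (r - i) - 1 from rfl] at hdvd)

end Garside

/-- Normal form of a conjugate: if `x = δ^k A₁⋯A_r` is in its super summit set
and `x^u ∈ S_x` for `u ∈ M`, then there are `u₀,…,u_r ∈ M` with `u₀ = τᵏ(u)`,
`u_r = u`, `uᵢ = (A_{i+1}⋯A_r u) ∧ δ·τ(Aᵢ⁻¹u_{i-1})`, such that the normal
form of `x^u` is `δ^k (u₀⁻¹A₁u₁)⋯(u_{r-1}⁻¹A_r u_r)`. -/
theorem normal_form_of_conjugate {G : Type*} [Group G] (S : Garside G)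
    (x u : G) (k : ℤ) (r : ℕ) (A : ℕ → G)
    (hr : 1 ≤ r) (hnf : S.IsNormalForm x k r A) (hx : S.InSS x x)
    (hu : u ∈ S.M) (hxu : S.InSS x (u⁻¹ * x * u)) :
    ∃ useq : ℕ → G, (∀ i, i ≤ r → useq i ∈ S.M) ∧
      S.IsTransportSeq k r A u useq ∧
      S.IsNormalForm (u⁻¹ * x * u) k r (fun i => (useq (i - 1))⁻¹ * A i * useq i) := by
  set y := u⁻¹ * x * u with hy
  obtain ⟨hprod, hA, hW⟩ := hnf
  obtain ⟨-, ⟨k0, hk0, hk0max⟩, ⟨s0, hs0, hs0min⟩⟩ := hx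
  obtain ⟨hconj, ⟨k1, hk1, hk1max⟩, ⟨s1, hs1, hs1min⟩⟩ := hxu
  set u0 := S.tauPow k u with hu0
  -- basic facts about x
  have hP0 : prodSeg A 0 r ∈ S.M := S.prodSeg_mem (fun j h1 h2 => (hA j h1 h2).1.1)
  have hδkx : (S.δ ^ k)⁻¹ * x ∈ S.M := by
    rw [hprod, inv_mul_cancel_left]
    exact hP0
  have hkk0 : k ≤ k0 := hk0.2 k hδkx
  have hk0k1 : k0 ≤ k1 := hk1max x (IsConj.refl x) k0 hk0
  have hky : (S.δ ^ k)⁻¹ * y ∈ S.M := by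
    have e : (S.δ ^ k)⁻¹ * y = S.δ ^ (k1 - k) * ((S.δ ^ k1)⁻¹ * y) := by group
    rw [e]
    exact mul_mem (S.zpow_mem_of_nonneg (by omega)) hk1.1
  have hxsup : x⁻¹ * S.δ ^ (k + (r : ℤ)) ∈ S.M := by
    have hP : (prodSeg A 0 r)⁻¹ * S.δ ^ (r : ℕ) ∈ S.M := by
      have := S.prodSeg_dvd_pow' (i := 0) (r := r) (by omega)
        (fun j h1 h2 => (hA j h1 h2).1)
      simpa using this
    rw [hprod]
    have e : (S.δ ^ k * prodSeg A 0 r)⁻¹ * S.δ ^ (k + (r : ℤ))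
        = (prodSeg A 0 r)⁻¹ * S.δ ^ ((r : ℕ) : ℤ) := by group
    rw [e, zpow_natCast]
    exact hP
  have hs0kr : s0 ≤ k + r := hs0.2 _ hxsup
  have hs1s0 : s1 ≤ s0 := hs1min x (IsConj.refl x) s0 hs0
  have hs0s1 : s0 ≤ s1 := hs0min y hconj s1 hs1
  have hs0lb : k + r ≤ s0 := by
    by_contra hcon
    push_neg at hcon
    have hxd : x⁻¹ * S.δ ^ (k + (r : ℤ) - 1) ∈ S.M := by
      have e : x⁻¹ * S.δ ^ (k + (r : ℤ) - 1)
          = (x⁻¹ * S.δ ^ s0) * S.δ ^ (k + (r : ℤ) - 1 - s0) := by group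
      rw [e]
      exact mul_mem hs0.1 (S.zpow_mem_of_nonneg (by omega))
    have hPd : (prodSeg A 0 r)⁻¹ * S.δ ^ (r - 1 : ℕ) ∈ S.M := by
      rw [hprod] at hxd
      have e : (S.δ ^ k * prodSeg A 0 r)⁻¹ * S.δ ^ (k + (r : ℤ) - 1)
          = (prodSeg A 0 r)⁻¹ * S.δ ^ ((r : ℤ) - 1) := by group
      rw [e] at hxd
      rw [show ((r : ℤ) - 1) = ((r - 1 : ℕ) : ℤ) from by omega, zpow_natCast] at hxd
      exact hxd
    exact S.min_len' hA hW (show 0 < r from hr) (by simpa using hPd)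
  -- the element w = δ^{-k} y
  set w : G := u0⁻¹ * prodSeg A 0 r * u with hwdef
  have hwy : w = (S.δ ^ k)⁻¹ * y := by
    rw [hwdef, hy, hprod, hu0]
    simp only [Garside.tauPow]
    group
  have hwM : w ∈ S.M := by rw [hwy]; exact hky
  have hysup : y⁻¹ * S.δ ^ (k + (r : ℤ)) ∈ S.M := by
    have e : y⁻¹ * S.δ ^ (k + (r : ℤ)) = (y⁻¹ * S.δ ^ s1) * S.δ ^ (k + (r : ℤ) - s1) := by group
    rw [e]
    exact mul_mem hs1.1 (S.zpow_mem_of_nonneg (by omega))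
  have hwsup : w⁻¹ * S.δ ^ (r : ℕ) ∈ S.M := by
    rw [hwy, ← zpow_natCast S.δ r]
    have e : ((S.δ ^ k)⁻¹ * y)⁻¹ * S.δ ^ ((r : ℕ) : ℤ) = y⁻¹ * S.δ ^ (k + (r : ℤ)) := by group
    rw [e]
    exact hysup
  -- greedy sequence for w
  obtain ⟨wseq, hwseq0, hwseqS⟩ : ∃ f : ℕ → G, f 0 = w ∧
      ∀ n, f (n + 1) = (S.gcd S.δ (f n))⁻¹ * f n :=
    ⟨fun n => Nat.rec w (fun _ v => (S.gcd S.δ v)⁻¹ * v) n, rfl, fun n => rfl⟩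
  obtain ⟨C, hCdef⟩ : ∃ g : ℕ → G, ∀ n, g n = S.gcd S.δ (wseq (n - 1)) :=
    ⟨fun n => S.gcd S.δ (wseq (n - 1)), fun n => rfl⟩
  have hC1 : ∀ n, C (n + 1) = S.gcd S.δ (wseq n) := by
    intro n
    rw [hCdef]
    norm_num
  have hwseqM : ∀ n, wseq n ∈ S.M := by
    intro n
    induction n with
    | zero => rw [hwseq0]; exact hwM
    | succ n ih => rw [hwseqS]; exact S.gcd_dvd_right S.δ (wseq n)
  have hCM : ∀ n, C (n + 1) ∈ S.M := fun n => by
    rw [hC1]; exact S.gcd_mem S.δ_mem (hwseqM n)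
  have hCsimple : ∀ n, S.Simple (C (n + 1)) := fun n =>
    ⟨hCM n, by rw [hC1]; exact S.gcd_dvd_left S.δ (wseq n)⟩
  -- pad chain
  have hwchain : ∀ n, n ≤ r → (wseq n)⁻¹ * S.δ ^ (r - n : ℕ) ∈ S.M := by
    intro n
    induction n with
    | zero => intro _; rw [hwseq0]; simpa using hwsup
    | succ n ih =>
      intro h
      have hh := ih (by omega)
      rw [show (r - n : ℕ) = (r - (n + 1)) + 1 from by omega] at hh
      have hp := S.pad (r - (n + 1)) hh
      rw [hwseqS n]
      exact hp
  have hwr : wseq r = 1 := by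
    have hh := hwchain r (le_refl r)
    simp only [Nat.sub_self, pow_zero, mul_one] at hh
    exact S.eq_one_of_inv_mem (hwseqM r) hh
  have hDw : ∀ n, w = prodSeg C 0 n * wseq n := by
    intro n
    induction n with
    | zero => rw [prodSeg_self, hwseq0, one_mul]
    | succ n ih =>
      have e : prodSeg C 0 n * C (n + 1) * ((S.gcd S.δ (wseq n))⁻¹ * wseq n)
          = prodSeg C 0 n * wseq n := by
        rw [hC1 n]
        group
      rw [prodSeg_succ_right C (Nat.zero_le n), hwseqS n, e, ← ih]
  have hDrw : prodSeg C 0 r = w := by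
    have h := hDw r
    rw [hwr, mul_one] at h
    exact h.symm
  have hwne : ∀ m, m < r → wseq m ≠ 1 := by
    intro m hm hcon
    have hDm : w = prodSeg C 0 m := by rw [hDw m, hcon, mul_one]
    have hDdvd : (prodSeg C 0 m)⁻¹ * S.δ ^ (m : ℕ) ∈ S.M := by
      have := S.prodSeg_dvd_pow' (i := 0) (r := m) (by omega)
        (fun j h1 h2 => by
          obtain ⟨l, rfl⟩ : ∃ l, j = l + 1 := ⟨j - 1, by omega⟩
          exact hCsimple l)
      simpa using this
    have hwd : w⁻¹ * S.δ ^ (m : ℕ) ∈ S.M := by rw [hDm]; exact hDdvd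
    have hyd : y⁻¹ * S.δ ^ (k + (r : ℤ) - 1) ∈ S.M := by
      have e : y⁻¹ * S.δ ^ (k + (r : ℤ) - 1)
          = (w⁻¹ * S.δ ^ ((m : ℕ) : ℤ)) * S.δ ^ ((r : ℤ) - 1 - (m : ℤ)) := by
        rw [hwy]; group
      rw [e, zpow_natCast]
      exact mul_mem hwd (S.zpow_mem_of_nonneg (by omega))
    have := hs1.2 _ hyd
    omega
  have hCne : ∀ m, 1 ≤ m → m ≤ r → C m ≠ 1 := by
    intro m h1 h2 hcon
    obtain ⟨i, rfl⟩ : ∃ i, m = i + 1 := ⟨m - 1, by omega⟩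
    have : wseq i = 1 := S.eq_one_of_gcd_delta_eq_one (hwseqM i) (by rw [← hC1 i]; exact hcon)
    exact hwne i (by omega) this
  -- greedy weightedness
  have hCW : ∀ i, 1 ≤ i → i < r → S.gcd ((C i)⁻¹ * S.δ) (C (i + 1)) = 1 := by
    intro i h1 h2
    obtain ⟨m, rfl⟩ : ∃ m, i = m + 1 := ⟨i - 1, by omega⟩
    set g := S.gcd ((C (m + 1))⁻¹ * S.δ) (C (m + 1 + 1)) with hg
    have hgM : g ∈ S.M := S.gcd_mem (hCsimple m).2 (hCM (m + 1))
    have h1' : g⁻¹ * ((C (m + 1))⁻¹ * S.δ) ∈ S.M := S.gcd_dvd_left _ _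
    have h2' : g⁻¹ * C (m + 1 + 1) ∈ S.M := S.gcd_dvd_right _ _
    have hd1 : (C (m + 1) * g)⁻¹ * S.δ ∈ S.M := by
      rw [show (C (m + 1) * g)⁻¹ * S.δ = g⁻¹ * ((C (m + 1))⁻¹ * S.δ) from by group]
      exact h1'
    have hd2 : (C (m + 1) * g)⁻¹ * wseq m ∈ S.M := by
      have hgw : g⁻¹ * wseq (m + 1) ∈ S.M := by
        rw [show g⁻¹ * wseq (m + 1)
            = (g⁻¹ * C (m + 1 + 1)) * ((C (m + 1 + 1))⁻¹ * wseq (m + 1)) from by group]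
        exact mul_mem h2' (by rw [hC1 (m + 1)]; exact S.gcd_dvd_right _ _)
      rw [show (C (m + 1) * g)⁻¹ * wseq m = g⁻¹ * ((C (m + 1))⁻¹ * wseq m) from by group]
      have e : (C (m + 1))⁻¹ * wseq m = wseq (m + 1) := by rw [hwseqS m, hC1 m]
      rw [e]
      exact hgw
    have hd3 : (C (m + 1) * g)⁻¹ * C (m + 1) ∈ S.M := by
      have hcomb := S.gcd_greatest _ _ _ hd1 hd2
      rwa [← hC1 m] at hcomb
    have hginv : g⁻¹ ∈ S.M := by
      rw [show g⁻¹ = (C (m + 1) * g)⁻¹ * C (m + 1) from by group]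
      exact hd3
    exact S.eq_one_of_inv_mem hgM hginv
  -- the transport sequence
  obtain ⟨useq, husdef⟩ : ∃ f : ℕ → G, ∀ n, f n = (prodSeg A 0 n)⁻¹ * u0 * prodSeg C 0 n :=
    ⟨fun n => (prodSeg A 0 n)⁻¹ * u0 * prodSeg C 0 n, fun n => rfl⟩
  have hus0 : useq 0 = u0 := by
    rw [husdef, prodSeg_self, prodSeg_self]
    simp
  have hα : ∀ m, m ≤ r → (useq m)⁻¹ * (prodSeg A m r * u) = wseq m := by
    intro m hm
    rw [husdef]
    rw [show ((prodSeg A 0 m)⁻¹ * u0 * prodSeg C 0 m)⁻¹ * (prodSeg A m r * u)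
        = (prodSeg C 0 m)⁻¹ * (u0⁻¹ * (prodSeg A 0 m * prodSeg A m r) * u) from by group]
    rw [prodSeg_split A (Nat.zero_le m) hm]
    rw [show u0⁻¹ * prodSeg A 0 r * u = w from hwdef.symm]
    rw [hDw m]
    group
  have hstep : ∀ m, 1 ≤ m → useq m = (A m)⁻¹ * useq (m - 1) * C m := by
    intro m h1
    obtain ⟨i, rfl⟩ : ∃ i, m = i + 1 := ⟨m - 1, by omega⟩
    rw [husdef, husdef]
    simp only [Nat.add_sub_cancel]
    rw [prodSeg_succ_right A (Nat.zero_le i), prodSeg_succ_right C (Nat.zero_le i)]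
    group
  have hformula : ∀ m, 1 ≤ m → m ≤ r →
      useq m = S.gcd (prodSeg A m r * u) ((A m)⁻¹ * useq (m - 1) * S.δ) := by
    intro m h1 h2
    symm
    apply S.gcd_eq_of
    · rw [hα m h2]
      exact hwseqM m
    · obtain ⟨i, rfl⟩ : ∃ i, m = i + 1 := ⟨m - 1, by omega⟩
      simp only [Nat.add_sub_cancel]
      rw [hstep (i + 1) (by omega)]
      simp only [Nat.add_sub_cancel]
      rw [show ((A (i + 1))⁻¹ * useq i * C (i + 1))⁻¹ * ((A (i + 1))⁻¹ * useq i * S.δ)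
          = (C (i + 1))⁻¹ * S.δ from by group]
      exact (hCsimple i).2
    · obtain ⟨i, rfl⟩ : ∃ i, m = i + 1 := ⟨m - 1, by omega⟩
      simp only [Nat.add_sub_cancel]
      intro e he1 he2
      have hir : i < r := by omega
      have hL1 : (S.lcm (useq i) (A (i + 1) * e))⁻¹ * (prodSeg A i r * u) ∈ S.M := by
        apply S.lcm_least
        · rw [hα i (by omega)]
          exact hwseqM i
        · rw [show (A (i + 1) * e)⁻¹ * (prodSeg A i r * u)
              = e⁻¹ * ((A (i + 1))⁻¹ * prodSeg A i r * u) from by group]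
          rw [prodSeg_succ_left A hir]
          rw [show e⁻¹ * ((A (i + 1))⁻¹ * (A (i + 1) * prodSeg A (i + 1) r) * u)
              = e⁻¹ * (prodSeg A (i + 1) r * u) from by group]
          exact he1
      have hL2 : (S.lcm (useq i) (A (i + 1) * e))⁻¹ * (useq i * S.δ) ∈ S.M := by
        apply S.lcm_least
        · rw [show (useq i)⁻¹ * (useq i * S.δ) = S.δ from by group]
          exact S.δ_mem
        · rw [show (A (i + 1) * e)⁻¹ * (useq i * S.δ)
              = e⁻¹ * ((A (i + 1))⁻¹ * useq i * S.δ) from by group]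
          exact he2
      have hcδ : ((useq i)⁻¹ * S.lcm (useq i) (A (i + 1) * e))⁻¹ * S.δ ∈ S.M := by
        rw [show ((useq i)⁻¹ * S.lcm (useq i) (A (i + 1) * e))⁻¹ * S.δ
            = (S.lcm (useq i) (A (i + 1) * e))⁻¹ * (useq i * S.δ) from by group]
        exact hL2
      have hcw : ((useq i)⁻¹ * S.lcm (useq i) (A (i + 1) * e))⁻¹ * wseq i ∈ S.M := by
        rw [show ((useq i)⁻¹ * S.lcm (useq i) (A (i + 1) * e))⁻¹ * wseq i
            = (S.lcm (useq i) (A (i + 1) * e))⁻¹ * (useq i * ((useq i)⁻¹ * (prodSeg A i r * u)))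
              * ((useq i)⁻¹ * (prodSeg A i r * u))⁻¹ * wseq i from by group]
        rw [hα i (by omega)]
        rw [show (S.lcm (useq i) (A (i + 1) * e))⁻¹ * (useq i * wseq i) * (wseq i)⁻¹ * wseq i
            = (S.lcm (useq i) (A (i + 1) * e))⁻¹ * (useq i * wseq i) from by group]
        rw [show useq i * wseq i = useq i * ((useq i)⁻¹ * (prodSeg A i r * u)) from by
          rw [hα i (by omega)]]
        rw [mul_inv_cancel_left]
        exact hL1
      have hcC : ((useq i)⁻¹ * S.lcm (useq i) (A (i + 1) * e))⁻¹ * C (i + 1) ∈ S.M := by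
        rw [hC1 i]
        exact S.gcd_greatest _ _ _ hcδ hcw
      rw [hstep (i + 1) (by omega)]
      simp only [Nat.add_sub_cancel]
      rw [show e⁻¹ * ((A (i + 1))⁻¹ * useq i * C (i + 1))
          = ((A (i + 1) * e)⁻¹ * S.lcm (useq i) (A (i + 1) * e))
            * (((useq i)⁻¹ * S.lcm (useq i) (A (i + 1) * e))⁻¹ * C (i + 1)) from by group]
      exact mul_mem (S.lcm_dvd_right _ _) hcC
  have hmem : ∀ m, m ≤ r → useq m ∈ S.M := by
    intro m
    induction m with
    | zero =>
      intro _
      rw [hus0, hu0]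
      exact S.tau_zpow_mem k hu
    | succ m ih =>
      intro h
      rw [hformula (m + 1) (by omega) h]
      simp only [Nat.add_sub_cancel]
      apply S.gcd_mem
      · exact mul_mem (S.prodSeg_mem fun j h1 h2 => (hA j (by omega) h2).1.1) hu
      · rw [show (A (m + 1))⁻¹ * useq m * S.δ
            = ((A (m + 1))⁻¹ * S.δ) * (S.δ⁻¹ * useq m * S.δ) from by group]
        exact mul_mem (hA (m + 1) (by omega) h).1.2 (S.tau_mem (ih (by omega)))
  have husr : useq r = u := by
    rw [husdef, hDrw, hwdef]
    group
  have hBC : ∀ m, 1 ≤ m → (useq (m - 1))⁻¹ * A m * useq m = C m := by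
    intro m h1
    obtain ⟨i, rfl⟩ : ∃ i, m = i + 1 := ⟨m - 1, by omega⟩
    simp only [Nat.add_sub_cancel]
    rw [hstep (i + 1) (by omega)]
    simp only [Nat.add_sub_cancel]
    group
  refine ⟨useq, hmem, ⟨hus0, husr, ?_⟩, ?_, ?_, ?_⟩
  · -- transport formula
    intro i h1 h2
    rw [hformula i h1 h2]
    congr 1
    simp only [Garside.tauPow]
    group
  · -- product formula
    have hPB : prodSeg (fun i => (useq (i - 1))⁻¹ * A i * useq i) 0 r = prodSeg C 0 r :=
      prodSeg_congr (fun j hj1 hj2 => hBC j (by omega))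
    rw [hPB, hDrw, hwy]
    group
  · -- simplicity
    intro i h1 h2
    rw [show (fun i => (useq (i - 1))⁻¹ * A i * useq i) i = C i from hBC i h1]
    obtain ⟨m, rfl⟩ : ∃ m, i = m + 1 := ⟨i - 1, by omega⟩
    exact ⟨hCsimple m, hCne (m + 1) h1 h2⟩
  · -- weightedness
    intro i h1 h2
    rw [show (fun i => (useq (i - 1))⁻¹ * A i * useq i) i = C i from hBC i h1,
      show (fun i => (useq (i - 1))⁻¹ * A i * useq i) (i + 1) = C (i + 1) from
        hBC (i + 1) (by omega)]
    exact hCW i h1 h2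

end GarsideFormal
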